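/- If 2ρ² > 1 (and ρ < 1), then the mutual information I_h = −(1/2) ln(1 − (2ρ²)^h / R_h) converges, as h → ∞, to the strictly positive limit −(1/2) ln(1/ρ² − 1) (solvability of Gaussian root reconstruction in the Kesten–Stigum regime). -/

import Mathlib

/-- `R_h = 1 + ρ²((2ρ²)^h − 1)/(2ρ² − 1)` (closed form of the row sum). -/
noncomputable def Rseq (ρ : ℝ) (h : ℕ) : ℝ :=
  1 + ρ ^ 2 * ((2 * ρ ^ 2) ^ h - 1) / (2 * ρ ^ 2 - 1)

/-- Root–leaves mutual information `I_h = −(1/2) ln(1 − (2ρ²)^h / R_h)`. -/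
noncomputable def Iseq (ρ : ℝ) (h : ℕ) : ℝ :=
  -(1 / 2) * Real.log (1 - (2 * ρ ^ 2) ^ h / Rseq ρ h)

/-!
Writing `q = 2ρ²` and `c = ρ²/(2ρ² − 1)`, we have `R_h = 1 + c (q^h − 1)`, so
`q^h / R_h = 1 / (c + (1 − c) q^{-h}) → 1/c` when `q > 1`. Hence
`1 − q^h / R_h → 1 − (2ρ² − 1)/ρ² = 1/ρ² − 1`, which lies in `(0, 1)` for `1/2 < ρ² < 1`,
and `−(1/2) ln` is continuous and positive there.
-/

open Filter Topology

theorem tendsto_pow_div_one_add_mul_pow_sub_one {q c : ℝ} (hq : 1 < q) (hc : c ≠ 0) :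
    Tendsto (fun h : ℕ => q ^ h / (1 + c * (q ^ h - 1))) atTop (𝓝 c⁻¹) := by
  have hden : Tendsto (fun h : ℕ => (1 - c) * (q ^ h)⁻¹ + c) atTop (𝓝 c) := by
    simpa using ((tendsto_inv_atTop_zero.comp (tendsto_pow_atTop_atTop_of_one_lt hq)).const_mul
      (1 - c)).add_const c
  refine (hden.inv₀ hc).congr fun h => ?_
  have hqh : q ^ h ≠ 0 := pow_ne_zero h (by linarith)
  rw [← inv_div]
  congr 1
  field_simp
  ring

theorem Rseq_eq_one_add_mul (ρ : ℝ) (h : ℕ) :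
    Rseq ρ h = 1 + ρ ^ 2 / (2 * ρ ^ 2 - 1) * ((2 * ρ ^ 2) ^ h - 1) := by
  rw [Rseq, mul_div_right_comm]

theorem tendsto_one_sub_pow_div_Rseq {ρ : ℝ} (hρ : ρ ≠ 0) (hKS : 1 < 2 * ρ ^ 2) :
    Tendsto (fun h => 1 - (2 * ρ ^ 2) ^ h / Rseq ρ h) atTop (𝓝 (1 / ρ ^ 2 - 1)) := by
  have hc : ρ ^ 2 / (2 * ρ ^ 2 - 1) ≠ 0 := div_ne_zero (by positivity) (by linarith)
  have hlim : 1 - (ρ ^ 2 / (2 * ρ ^ 2 - 1))⁻¹ = 1 / ρ ^ 2 - 1 := by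
    field_simp
    ring
  simp_rw [Rseq_eq_one_add_mul, ← hlim]
  exact (tendsto_pow_div_one_add_mul_pow_sub_one hKS hc).const_sub 1

/-- In the Kesten–Stigum regime (`2ρ² > 1`, `ρ < 1`), the mutual information between
the root and the leaves converges to the strictly positive limit
`−(1/2) ln(1/ρ² − 1)`. -/
theorem mutualInfo_tendsto_pos (ρ : ℝ) (hρ : ρ ∈ Set.Ioo (0:ℝ) 1)
    (hKS : 1 < 2 * ρ ^ 2) :
    Filter.Tendsto (Iseq ρ) Filter.atTop
      (nhds (-(1 / 2) * Real.log (1 / ρ ^ 2 - 1))) ∧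
    0 < -(1 / 2) * Real.log (1 / ρ ^ 2 - 1) := by
  obtain ⟨hρ0, hρ1⟩ := hρ
  have hρ2 : 0 < ρ ^ 2 := by positivity
  have hL0 : 0 < 1 / ρ ^ 2 - 1 := by
    rw [sub_pos, lt_div_iff₀ hρ2]
    nlinarith
  have hL1 : 1 / ρ ^ 2 - 1 < 1 := by
    rw [sub_lt_iff_lt_add, div_lt_iff₀ hρ2]
    linarith
  refine ⟨?_, ?_⟩
  · exact ((Real.continuousAt_log hL0.ne').tendsto.comp
      (tendsto_one_sub_pow_div_Rseq hρ0.ne' hKS)).const_mul _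
  · exact mul_pos_of_neg_of_neg (by norm_num) (Real.log_neg hL0 hL1)
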